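/- arXiv:2404.13382 — 4 statements merged into one kernel-verified Lean document; each statement's English description precedes it below -/
import Mathlib

section
/- Let $F : \mathbb{R}^n \to \mathbb{R}$ be differentiable with $L$-Lipschitz gradient, let $x \in \mathbb{R}^n$, $g \in \mathbb{R}^n$, $\alpha > 0$, $0 < \gamma_2 < \gamma_1$, and set $p = -\gamma_1 \alpha g$ and $x^+ = x + p$. If $\|g\| < 1/\gamma_1$ (or indeed for any $g$), then $F(x^+) \le F(x) - \tfrac{1}{2}\alpha(\gamma_2 - \alpha\gamma_1^2 L)\|g\|^2 + \alpha \frac{\gamma_1^2}{2\gamma_2}\|\nabla F(x) - g\|^2$. -/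
/-!
Comparing `t ↦ F (x + t • v)` with its quadratic model, the difference has derivative
`⟪F' (x + t • v) - F' x, v⟫ - K t ‖v‖²`, which is nonpositive for `t ≥ 0` since `F'` is
`K`-Lipschitz; this gives the Descent Lemma. For the step `v = -(γ₁ α) g` it leaves the cross
term `-γ₁ α ⟪F' x - g, g⟫`, which Young's inequality with weight `γ₂` splits into
`α γ₁² / (2 γ₂) ‖F' x - g‖²` and `α γ₂ / 2 ‖g‖²`; what remains, `-α (γ₁ - γ₂) ‖g‖²`, is
nonpositive.
-/

open Set
open scoped NNReal RealInnerProductSpace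

section Descent

variable {E : Type*} [NormedAddCommGroup E] [InnerProductSpace ℝ E] {F : E → ℝ} {F' : E → E}

theorem HasGradientAt.hasDerivAt_comp_add_smul [CompleteSpace E] {g x v : E} {t : ℝ}
    (hF : HasGradientAt F g (x + t • v)) :
    HasDerivAt (fun s : ℝ => F (x + s • v)) ⟪g, v⟫ t := by
  have hline : HasDerivAt (fun s : ℝ => x + s • v) v t := by
    simpa using ((hasDerivAt_id t).smul_const v).const_add x
  have h := hF.hasFDerivAt.comp_hasDerivAt t hline
  rw [InnerProductSpace.toDual_apply_apply] at h
  exact h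

theorem inner_sub_le_of_lipschitzWith {K : ℝ≥0} (hlip : LipschitzWith K F') (x v : E) {t : ℝ}
    (ht : 0 ≤ t) : ⟪F' (x + t • v) - F' x, v⟫ ≤ K * t * ‖v‖ ^ 2 := by
  have hdist : ‖F' (x + t • v) - F' x‖ ≤ K * (t * ‖v‖) := by
    simpa [dist_eq_norm, norm_smul, abs_of_nonneg ht] using hlip.dist_le_mul (x + t • v) x
  calc ⟪F' (x + t • v) - F' x, v⟫ ≤ ‖F' (x + t • v) - F' x‖ * ‖v‖ := real_inner_le_norm _ _
    _ ≤ K * (t * ‖v‖) * ‖v‖ := by gcongr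
    _ = K * t * ‖v‖ ^ 2 := by ring

theorem le_add_inner_add_of_lipschitzWith_gradient [CompleteSpace E] {K : ℝ≥0}
    (hgrad : ∀ y, HasGradientAt F (F' y) y) (hlip : LipschitzWith K F') (x v : E) :
    F (x + v) ≤ F x + ⟪F' x, v⟫ + K / 2 * ‖v‖ ^ 2 := by
  set ψ : ℝ → ℝ := fun t => F (x + t • v) - t * ⟪F' x, v⟫ - K / 2 * t ^ 2 * ‖v‖ ^ 2
  have hψ : ∀ t, HasDerivAt ψ (⟪F' (x + t • v), v⟫ - ⟪F' x, v⟫ - K * t * ‖v‖ ^ 2) t := by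
    intro t
    have := (((hgrad (x + t • v)).hasDerivAt_comp_add_smul).sub
      ((hasDerivAt_id t).mul_const ⟪F' x, v⟫)).sub
      (((hasDerivAt_pow 2 t).const_mul (K / 2 : ℝ)).mul_const (‖v‖ ^ 2))
    refine this.congr_deriv ?_
    simp only [Nat.add_one_sub_one, pow_one, one_mul, Nat.cast_ofNat]
    ring
  have hanti : AntitoneOn ψ (Ici 0) := by
    refine antitoneOn_of_hasDerivWithinAt_nonpos (convex_Ici 0)
      (fun t _ => (hψ t).continuousAt.continuousWithinAt)
      (fun t _ => (hψ t).hasDerivWithinAt) fun t ht => ?_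
    rw [interior_Ici] at ht
    have := inner_sub_le_of_lipschitzWith hlip x v (ht.le)
    rw [inner_sub_left] at this
    linarith
  calc F (x + v) = ψ 1 + ⟪F' x, v⟫ + K / 2 * ‖v‖ ^ 2 := by
        simp only [ψ, one_smul, one_mul, one_pow]
        ring
    _ ≤ ψ 0 + ⟪F' x, v⟫ + K / 2 * ‖v‖ ^ 2 := by
      gcongr
      exact hanti (mem_Ici.2 le_rfl) (mem_Ici.2 zero_le_one) zero_le_one
    _ = F x + ⟪F' x, v⟫ + K / 2 * ‖v‖ ^ 2 := by simp [ψ]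

end Descent

theorem neg_inner_le_norm_sq_div_add {E : Type*} [NormedAddCommGroup E] [InnerProductSpace ℝ E]
    (a b : E) {c : ℝ} (hc : 0 < c) : -⟪a, b⟫ ≤ ‖a‖ ^ 2 / (2 * c) + c / 2 * ‖b‖ ^ 2 := by
  have hsquare : ‖a‖ ^ 2 / (2 * c) + c / 2 * ‖b‖ ^ 2 + ⟪a, b⟫ = ‖a + c • b‖ ^ 2 / (2 * c) := by
    rw [norm_add_sq_real, real_inner_smul_right, norm_smul, Real.norm_of_nonneg hc.le]
    field_simp
    ring
  have : 0 ≤ ‖a + c • b‖ ^ 2 / (2 * c) := by positivity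
  linarith

theorem stmt_4 {n : ℕ} (F : EuclideanSpace ℝ (Fin n) → ℝ)
    (F' : EuclideanSpace ℝ (Fin n) → EuclideanSpace ℝ (Fin n)) (L : ℝ) (hL : 0 < L)
    (hgrad : ∀ x, HasGradientAt F (F' x) x)
    (hlip : LipschitzWith (Real.toNNReal L) F')
    (x g : EuclideanSpace ℝ (Fin n)) (α γ₁ γ₂ : ℝ)
    (hα : 0 < α) (hγ₂ : 0 < γ₂) (hγ : γ₂ < γ₁) :
    F (x + (-(γ₁ * α)) • g) ≤
      F x - (1 / 2) * α * (γ₂ - α * γ₁ ^ 2 * L) * ‖g‖ ^ 2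
        + α * (γ₁ ^ 2 / (2 * γ₂)) * ‖F' x - g‖ ^ 2 := by
  have hdescent := le_add_inner_add_of_lipschitzWith_gradient hgrad hlip x ((-(γ₁ * α)) • g)
  rw [Real.coe_toNNReal L hL.le, real_inner_smul_right, norm_smul, Real.norm_eq_abs, mul_pow,
    sq_abs] at hdescent
  have hinner : ⟪F' x, g⟫ = ‖g‖ ^ 2 + ⟪F' x - g, g⟫ := by
    rw [inner_sub_left, real_inner_self_eq_norm_sq]; ring
  have hyoung := neg_inner_le_norm_sq_div_add (γ₁ • (F' x - g)) g hγ₂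
  rw [real_inner_smul_left, norm_smul, Real.norm_eq_abs, mul_pow, sq_abs] at hyoung
  have hgap : 0 ≤ (γ₁ - γ₂) * ‖g‖ ^ 2 := mul_nonneg (sub_nonneg.2 hγ.le) (sq_nonneg _)
  rw [hinner] at hdescent
  linear_combination hdescent + α * hyoung + α * hgap
end

section
/- Let $F : \mathbb{R}^n \to \mathbb{R}$ be differentiable with $L$-Lipschitz gradient, $x \in \mathbb{R}^n$, $\alpha > 0$, $0 < \gamma_2 < \gamma_1$. Let $g$ be a random vector with $\mathbb{E}[g] = \nabla F(x)$, and let the TRish step be $p = -\gamma_1\alpha g$ if $\|g\| < 1/\gamma_1$, $p = -\alpha g/\|g\|$ if $1/\gamma_1 \le \|g\| \le 1/\gamma_2$, and $p = -\gamma_2\alpha g$ if $\|g\| > 1/\gamma_2$. Set $\beta = \frac{\gamma_1^2 - \gamma_2^2}{2\gamma_2} + \tfrac{1}{2}\alpha\gamma_1^2 L$. Then $\mathbb{E}[F(x + p)] \le F(x) - \alpha\frac{\gamma_1^2}{2\gamma_2}\|\nabla F(x)\|^2 + \alpha\beta\,\mathbb{E}[\|g\|^2]$. -/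
/-!
Along the segment from `x` to `x + v`, the Lipschitz bound on the gradient gives the descent lemma
`F (x + v) ≤ F x + ⟪∇F x, v⟫ + L/2 ‖v‖²`. A TRish step is `p = -c • g` with a scale
`c ∈ [γ₂α, γ₁α]`; writing `-c = -γ₁α + (γ₁α - c)` and bounding `2⟪∇F x, g⟫ ≤ ‖∇F x‖² + ‖g‖²`
makes the bound affine in `⟪∇F x, g⟫` and `‖g‖²`, so its expectation only involves
`𝔼⟪∇F x, g⟫ = ‖∇F x‖²` and `𝔼‖g‖²`. The stated coefficients then follow from
`‖∇F x‖² ≤ 𝔼‖g‖²`, i.e. from `𝔼‖∇F x - g‖² = 𝔼‖g‖² - ‖∇F x‖² ≥ 0`.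
-/

open MeasureTheory Set

open scoped RealInnerProductSpace NNReal

section

variable {E : Type*} [NormedAddCommGroup E] [InnerProductSpace ℝ E]

theorem image_add_le_of_lipschitzWith_gradient [CompleteSpace E] {F : E → ℝ} {F' : E → E}
    {K : ℝ≥0}
    (hF : ∀ y, HasGradientAt F (F' y) y) (hF' : LipschitzWith K F') (x v : E) :
    F (x + v) ≤ F x + ⟪F' x, v⟫ + K / 2 * ‖v‖ ^ 2 := by
  set φ : ℝ → ℝ := fun t => F (x + t • v) - t * ⟪F' x, v⟫ - K / 2 * t ^ 2 * ‖v‖ ^ 2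
  have hφ : ∀ t, HasDerivAt φ (⟪F' (x + t • v) - F' x, v⟫ - K * t * ‖v‖ ^ 2) t := by
    intro t
    have hline : HasDerivAt (fun s : ℝ => x + s • v) v t := by
      simpa using ((hasDerivAt_id t).smul_const v).const_add x
    have hF_line := (hF (x + t • v)).hasFDerivAt.comp_hasDerivAt t hline
    have hquad := ((hasDerivAt_pow 2 t).const_mul (K / 2 : ℝ)).mul_const (‖v‖ ^ 2)
    refine ((hF_line.sub ((hasDerivAt_id t).mul_const ⟪F' x, v⟫)).sub hquad).congr_deriv ?_
    rw [InnerProductSpace.toDual_apply_apply, inner_sub_left]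
    simp only [Nat.cast_ofNat, one_mul, Nat.reduceSub, pow_one]
    ring
  have hderiv_nonpos : ∀ t, 0 ≤ t → ⟪F' (x + t • v) - F' x, v⟫ ≤ K * t * ‖v‖ ^ 2 := by
    intro t ht
    calc ⟪F' (x + t • v) - F' x, v⟫ ≤ ‖F' (x + t • v) - F' x‖ * ‖v‖ := real_inner_le_norm _ _
      _ ≤ K * ‖x + t • v - x‖ * ‖v‖ := by gcongr; exact hF'.norm_sub_le _ _
      _ = K * t * ‖v‖ ^ 2 := by
        rw [add_sub_cancel_left, norm_smul, Real.norm_of_nonneg ht]; ring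
  have hanti : AntitoneOn φ (Ici 0) :=
    antitoneOn_of_hasDerivWithinAt_nonpos (convex_Ici 0)
      (fun t _ => (hφ t).continuousAt.continuousWithinAt) (fun t _ => (hφ t).hasDerivWithinAt)
      (fun t ht => by
        rw [interior_Ici] at ht
        linarith [hderiv_nonpos t (le_of_lt ht)])
  have h10 : φ 1 ≤ φ 0 := hanti self_mem_Ici (mem_Ici.2 zero_le_one) zero_le_one
  simp only [φ, one_smul, one_mul, one_pow, zero_smul, add_zero, zero_mul] at h10
  linarith

theorem image_add_neg_smul_le [CompleteSpace E] {F : E → ℝ} {F' : E → E} {K : ℝ≥0}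
    (hF : ∀ y, HasGradientAt F (F' y) y) (hF' : LipschitzWith K F') (x u : E) {a b c : ℝ}
    (ha : 0 ≤ a) (hc : c ∈ Icc a b) :
    F (x + (-c) • u) ≤ (F x + (b - a) / 2 * ‖F' x‖ ^ 2) + (-b) * ⟪F' x, u⟫ +
      ((b - a) / 2 + K / 2 * b ^ 2) * ‖u‖ ^ 2 := by
  have hdesc := image_add_le_of_lipschitzWith_gradient hF hF' x ((-c) • u)
  rw [inner_smul_right, norm_smul, mul_pow, Real.norm_eq_abs, sq_abs] at hdesc
  have hinner : 2 * ⟪F' x, u⟫ ≤ ‖F' x‖ ^ 2 + ‖u‖ ^ 2 := by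
    linarith [norm_sub_sq_real (F' x) u, sq_nonneg ‖F' x - u‖]
  have hsq : c ^ 2 ≤ b ^ 2 := pow_le_pow_left₀ (ha.trans hc.1) hc.2 2
  linarith [mul_le_mul_of_nonneg_left hinner (sub_nonneg.2 hc.2),
    mul_nonneg (sub_nonneg.2 hc.1) (add_nonneg (sq_nonneg ‖F' x‖) (sq_nonneg ‖u‖)),
    mul_le_mul_of_nonneg_left hsq (mul_nonneg K.coe_nonneg (sq_nonneg ‖u‖))]

/-- The TRish step at a stochastic gradient `g` is `-(trishScale α γ₁ γ₂ ‖g‖) • g`. -/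
noncomputable def trishScale (α γ₁ γ₂ r : ℝ) : ℝ :=
  if r < 1 / γ₁ then γ₁ * α else if r ≤ 1 / γ₂ then α / r else γ₂ * α

theorem trishScale_mem_Icc {α γ₁ γ₂ : ℝ} (hα : 0 ≤ α) (hγ₂ : 0 < γ₂) (hγ : γ₂ ≤ γ₁) (r : ℝ) :
    trishScale α γ₁ γ₂ r ∈ Icc (γ₂ * α) (γ₁ * α) := by
  have hγα : γ₂ * α ≤ γ₁ * α := mul_le_mul_of_nonneg_right hγ hα
  unfold trishScale
  split_ifs with hsmall hmid
  · exact ⟨hγα, le_rfl⟩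
  · have hγ₁ : 0 < γ₁ := hγ₂.trans_le hγ
    have hr₁ : 1 ≤ γ₁ * r := by rwa [not_lt, div_le_iff₀' hγ₁] at hsmall
    have hr₂ : γ₂ * r ≤ 1 := by rwa [le_div_iff₀' hγ₂] at hmid
    have hr : 0 < r := pos_of_mul_pos_right (one_pos.trans_le hr₁) hγ₁.le
    constructor
    · rw [le_div_iff₀ hr]; nlinarith
    · rw [div_le_iff₀ hr]; nlinarith
  · exact ⟨le_rfl, hγα⟩

section Expectation

variable {Ω : Type*} [MeasurableSpace Ω] {μ : Measure Ω} [IsProbabilityMeasure μ]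
  {g : Ω → E} {m : E}

theorem integrable_const_add_inner_add_norm_sq (hg : Integrable g μ)
    (hg2 : Integrable (fun ω => ‖g ω‖ ^ 2) μ) (C₀ C₁ C₂ : ℝ) :
    Integrable (fun ω => C₀ + C₁ * ⟪m, g ω⟫ + C₂ * ‖g ω‖ ^ 2) μ :=
  ((integrable_const C₀).add ((hg.const_inner m).const_mul C₁)).add (hg2.const_mul C₂)

theorem integral_const_add_inner_add_norm_sq [CompleteSpace E] (hg : Integrable g μ)
    (hg2 : Integrable (fun ω => ‖g ω‖ ^ 2) μ) (hmean : ∫ ω, g ω ∂μ = m) (C₀ C₁ C₂ : ℝ) :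
    ∫ ω, (C₀ + C₁ * ⟪m, g ω⟫ + C₂ * ‖g ω‖ ^ 2) ∂μ =
      C₀ + C₁ * ‖m‖ ^ 2 + C₂ * ∫ ω, ‖g ω‖ ^ 2 ∂μ := by
  have hinner : Integrable (fun ω => C₁ * ⟪m, g ω⟫) μ := (hg.const_inner m).const_mul C₁
  have hconst_inner : Integrable (fun ω => C₀ + C₁ * ⟪m, g ω⟫) μ :=
    (integrable_const C₀).add hinner
  rw [integral_add hconst_inner (hg2.const_mul C₂),
    integral_add (integrable_const C₀) hinner,
    integral_const_mul, integral_const_mul, integral_inner hg, hmean,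
    real_inner_self_eq_norm_sq, integral_const, probReal_univ, one_smul]

theorem integral_norm_sub_sq [CompleteSpace E] (hg : Integrable g μ)
    (hg2 : Integrable (fun ω => ‖g ω‖ ^ 2) μ) (hmean : ∫ ω, g ω ∂μ = m) :
    ∫ ω, ‖m - g ω‖ ^ 2 ∂μ = ∫ ω, ‖g ω‖ ^ 2 ∂μ - ‖m‖ ^ 2 := by
  have hexpand : ∀ ω, ‖m - g ω‖ ^ 2 = ‖m‖ ^ 2 + (-2) * ⟪m, g ω⟫ + 1 * ‖g ω‖ ^ 2 := by
    intro ω; rw [norm_sub_sq_real]; ring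
  simp only [hexpand, integral_const_add_inner_add_norm_sq hg hg2 hmean]
  ring

theorem norm_sq_le_integral_norm_sq [CompleteSpace E] (hg : Integrable g μ)
    (hg2 : Integrable (fun ω => ‖g ω‖ ^ 2) μ) (hmean : ∫ ω, g ω ∂μ = m) :
    ‖m‖ ^ 2 ≤ ∫ ω, ‖g ω‖ ^ 2 ∂μ := by
  have := integral_norm_sub_sq hg hg2 hmean ▸ integral_nonneg fun ω => sq_nonneg ‖m - g ω‖
  linarith

end Expectation

end

theorem stmt_7 {n : ℕ} (F : EuclideanSpace ℝ (Fin n) → ℝ)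
    (F' : EuclideanSpace ℝ (Fin n) → EuclideanSpace ℝ (Fin n)) (L : ℝ) (hL : 0 < L)
    (hgrad : ∀ y, HasGradientAt F (F' y) y)
    (hlip : LipschitzWith (Real.toNNReal L) F')
    (x : EuclideanSpace ℝ (Fin n)) (α γ₁ γ₂ β : ℝ)
    (hα : 0 < α) (hγ₂ : 0 < γ₂) (hγ : γ₂ < γ₁)
    (hβ : β = (γ₁ ^ 2 - γ₂ ^ 2) / (2 * γ₂) + (1 / 2) * α * γ₁ ^ 2 * L)
    {Ω : Type*} [MeasurableSpace Ω] (μ : Measure Ω) [IsProbabilityMeasure μ]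
    (g : Ω → EuclideanSpace ℝ (Fin n))
    (p : Ω → EuclideanSpace ℝ (Fin n))
    (hp : ∀ ω, p ω =
      if ‖g ω‖ < 1 / γ₁ then (-(γ₁ * α)) • g ω
      else if ‖g ω‖ ≤ 1 / γ₂ then (-(α / ‖g ω‖)) • g ω
      else (-(γ₂ * α)) • g ω)
    (hint : Integrable g μ)
    (hintF : Integrable (fun ω => F (x + p ω)) μ)
    (hint2 : Integrable (fun ω => ‖g ω‖ ^ 2) μ)
    (hmean : ∫ ω, g ω ∂μ = F' x) :
    ∫ ω, F (x + p ω) ∂μ ≤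
      F x - α * (γ₁ ^ 2 / (2 * γ₂)) * ‖F' x‖ ^ 2 + α * β * ∫ ω, ‖g ω‖ ^ 2 ∂μ := by
  have hγ₁ : 0 < γ₁ := hγ₂.trans hγ
  have hstep : ∀ ω, F (x + p ω) ≤ (F x + (γ₁ * α - γ₂ * α) / 2 * ‖F' x‖ ^ 2) +
      (-(γ₁ * α)) * ⟪F' x, g ω⟫ + ((γ₁ * α - γ₂ * α) / 2 + L / 2 * (γ₁ * α) ^ 2) * ‖g ω‖ ^ 2 := by
    intro ω
    have hpω : p ω = (-trishScale α γ₁ γ₂ ‖g ω‖) • g ω := by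
      rw [hp ω, trishScale]; split_ifs <;> rfl
    rw [hpω, ← Real.coe_toNNReal L hL.le]
    exact image_add_neg_smul_le hgrad hlip x (g ω) (by positivity)
      (trishScale_mem_Icc hα.le hγ₂ hγ.le _)
  have hmoment := norm_sq_le_integral_norm_sq hint hint2 hmean
  refine (integral_mono hintF (integrable_const_add_inner_add_norm_sq hint hint2 _ _ _)
    hstep).trans ?_
  rw [integral_const_add_inner_add_norm_sq hint hint2 hmean, hβ, ← sub_nonneg]
  have hgap : 0 ≤ α / (2 * γ₂) * (γ₂ ^ 2 * ‖F' x‖ ^ 2 +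
      γ₁ * (γ₁ - γ₂) * (∫ ω, ‖g ω‖ ^ 2 ∂μ - ‖F' x‖ ^ 2)) :=
    mul_nonneg (by positivity) (add_nonneg (by positivity)
      (mul_nonneg (mul_nonneg hγ₁.le (sub_nonneg.2 hγ.le)) (sub_nonneg.2 hmoment)))
  refine hgap.trans_eq ?_
  field_simp
  ring
end

section
/- Under the same setup, with $\beta = \frac{\gamma_1^2 - \gamma_2^2}{2\gamma_2} + \tfrac{1}{2}\alpha\gamma_1^2 L$, one has $\mathbb{E}[F(x+p)] \le F(x) - \tfrac{1}{2}\alpha(\gamma_2 - \alpha\gamma_1^2 L)\|\nabla F(x)\|^2 + \alpha\beta\,\mathbb{E}[\|\nabla F(x) - g\|^2]$. -/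
/-!
Write the TRish step as `p = -γ α g` with `γ ∈ [γ₂, γ₁]` (in the middle regime `γ = 1 / ‖g‖`).
The descent lemma `F (x + v) ≤ F x + ⟪∇F x, v⟫ + L/2 ‖v‖²` then bounds `F (x + p)` by
`F x - γ α ⟪∇F x, g⟫ + L/2 γ² α² ‖g‖²`. The excess `(γ - γ₂) α (-⟪∇F x, g⟫)` is at most
`(γ₁ - γ₂) α ‖∇F x - g‖²`, so `γ` can be replaced by the constants `γ₂` and `γ₁`, and taking
expectations with `𝔼 ⟪∇F x, g⟫ = ‖∇F x‖²` and `𝔼 ‖g‖² = ‖∇F x‖² + 𝔼 ‖∇F x - g‖²` gives the bound.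
-/

open MeasureTheory
open scoped RealInnerProductSpace NNReal

section Normed

variable {E : Type*} [NormedAddCommGroup E] [NormedSpace ℝ E]

noncomputable def trishStep (α γ₁ γ₂ : ℝ) (g : E) : E :=
  if ‖g‖ < 1 / γ₁ then (-(γ₁ * α)) • g
  else if ‖g‖ ≤ 1 / γ₂ then (-(α / ‖g‖)) • g
  else (-(γ₂ * α)) • g

theorem exists_trishStep_eq_smul {α γ₁ γ₂ : ℝ} (hγ₂ : 0 < γ₂) (hγ : γ₂ ≤ γ₁) (g : E) :
    ∃ γ ∈ Set.Icc γ₂ γ₁, trishStep α γ₁ γ₂ g = (-(γ * α)) • g := by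
  unfold trishStep
  split_ifs with hsmall hmid
  · exact ⟨γ₁, ⟨hγ, le_rfl⟩, rfl⟩
  · have hγ₁ : 0 < γ₁ := hγ₂.trans_le hγ
    have hg : 0 < ‖g‖ := (one_div_pos.2 hγ₁).trans_le (not_lt.1 hsmall)
    refine ⟨1 / ‖g‖, ⟨(le_one_div hγ₂ hg).2 hmid, (one_div_le hg hγ₁).2 (not_lt.1 hsmall)⟩, ?_⟩
    rw [one_div_mul_eq_div]
  · exact ⟨γ₂, ⟨le_rfl, hγ⟩, rfl⟩

end Normed

theorem integrable_norm_sq_of_integrable_norm_sub_sq {E Ω : Type*} [NormedAddCommGroup E]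
    [MeasurableSpace Ω] {μ : Measure Ω} [IsFiniteMeasure μ] {g : Ω → E}
    (hg : AEStronglyMeasurable g μ) (m : E) (h : Integrable (fun ω => ‖m - g ω‖ ^ 2) μ) :
    Integrable (fun ω => ‖g ω‖ ^ 2) μ := by
  have hsub : MemLp (fun ω => m - g ω) 2 μ :=
    (memLp_two_iff_integrable_sq_norm (aestronglyMeasurable_const.sub hg)).2 h
  have hg₂ : MemLp g 2 μ := by simpa [Pi.sub_def] using (memLp_const m).sub hsub
  exact (memLp_two_iff_integrable_sq_norm hg).1 hg₂

section InnerProduct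

variable {E : Type*} [NormedAddCommGroup E] [InnerProductSpace ℝ E]

theorem neg_inner_le_norm_sub_sq (a b : E) : -⟪a, b⟫ ≤ ‖a - b‖ ^ 2 := by
  rw [norm_sub_sq_real]
  nlinarith [abs_real_inner_le_norm a b, le_abs_self ⟪a, b⟫, abs_nonneg ⟪a, b⟫,
    sq_nonneg (‖a‖ - ‖b‖)]

variable [CompleteSpace E]

theorem apply_add_le_of_lipschitzWith_gradient {F : E → ℝ} {F' : E → E} {K : ℝ≥0}
    (hgrad : ∀ y, HasGradientAt F (F' y) y) (hlip : LipschitzWith K F') (x v : E) :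
    F (x + v) ≤ F x + ⟪F' x, v⟫ + K / 2 * ‖v‖ ^ 2 := by
  set φ : ℝ → ℝ := fun t => F (x + t • v) - t * ⟪F' x, v⟫ - K / 2 * t ^ 2 * ‖v‖ ^ 2
  have hφ : ∀ t, HasDerivAt φ (⟪F' (x + t • v) - F' x, v⟫ - K * t * ‖v‖ ^ 2) t := by
    intro t
    have hline : HasDerivAt (fun t : ℝ => x + t • v) v t := by
      simpa using ((hasDerivAt_id t).smul_const v).const_add x
    have hF : HasDerivAt (fun t : ℝ => F (x + t • v)) ⟪F' (x + t • v), v⟫ t := by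
      simpa [Function.comp_def] using (hgrad (x + t • v)).hasFDerivAt.comp_hasDerivAt t hline
    refine ((hF.sub ((hasDerivAt_id' t).mul_const ⟪F' x, v⟫)).sub
      (((hasDerivAt_pow 2 t).const_mul (K / 2 : ℝ)).mul_const (‖v‖ ^ 2))).congr_deriv ?_
    rw [inner_sub_left]
    push_cast
    ring
  have hφ_nonpos : ∀ t ∈ interior (Set.Ici (0 : ℝ)),
      ⟪F' (x + t • v) - F' x, v⟫ - K * t * ‖v‖ ^ 2 ≤ 0 := by
    intro t ht
    rw [interior_Ici, Set.mem_Ioi] at ht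
    have hdist : ‖F' (x + t • v) - F' x‖ ≤ K * (t * ‖v‖) := by
      simpa [dist_eq_norm, norm_smul, abs_of_pos ht] using hlip.dist_le_mul (x + t • v) x
    rw [sub_nonpos]
    calc ⟪F' (x + t • v) - F' x, v⟫ ≤ ‖F' (x + t • v) - F' x‖ * ‖v‖ := real_inner_le_norm _ _
      _ ≤ K * (t * ‖v‖) * ‖v‖ := by gcongr
      _ = K * t * ‖v‖ ^ 2 := by ring
  have hanti : AntitoneOn φ (Set.Ici 0) :=
    antitoneOn_of_hasDerivWithinAt_nonpos (convex_Ici 0)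
      (fun t _ => (hφ t).continuousAt.continuousWithinAt)
      (fun t _ => (hφ t).hasDerivWithinAt) hφ_nonpos
  have h01 := hanti Set.self_mem_Ici (Set.mem_Ici.2 zero_le_one) zero_le_one
  simp only [φ, one_smul, zero_smul, add_zero, one_mul, zero_mul, one_pow, sub_zero,
    mul_zero, zero_pow two_ne_zero] at h01
  linarith

theorem apply_add_trishStep_le {F : E → ℝ} {F' : E → E} {K : ℝ≥0}
    (hgrad : ∀ y, HasGradientAt F (F' y) y) (hlip : LipschitzWith K F') (x g : E)
    {α γ₁ γ₂ : ℝ} (hα : 0 ≤ α) (hγ₂ : 0 < γ₂) (hγ : γ₂ ≤ γ₁) :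
    F (x + trishStep α γ₁ γ₂ g) ≤ F x - α * γ₂ * ⟪F' x, g⟫
      + α * (γ₁ - γ₂) * ‖F' x - g‖ ^ 2 + K / 2 * α ^ 2 * γ₁ ^ 2 * ‖g‖ ^ 2 := by
  obtain ⟨γ, ⟨hγ₂γ, hγγ₁⟩, hstep⟩ := exists_trishStep_eq_smul (α := α) hγ₂ hγ g
  have hγ_nonneg : 0 ≤ γ := hγ₂.le.trans hγ₂γ
  have hdescent := apply_add_le_of_lipschitzWith_gradient hgrad hlip x (-(γ * α) • g)
  rw [real_inner_smul_right, norm_smul, Real.norm_eq_abs, abs_neg,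
    abs_of_nonneg (mul_nonneg hγ_nonneg hα)] at hdescent
  have hinner : -(γ * α) * ⟪F' x, g⟫
      ≤ -(α * γ₂ * ⟪F' x, g⟫) + α * (γ₁ - γ₂) * ‖F' x - g‖ ^ 2 := by
    have hexcess : α * (γ - γ₂) * -⟪F' x, g⟫ ≤ α * (γ₁ - γ₂) * ‖F' x - g‖ ^ 2 :=
      calc α * (γ - γ₂) * -⟪F' x, g⟫ ≤ α * (γ - γ₂) * ‖F' x - g‖ ^ 2 := by
            gcongr
            exact neg_inner_le_norm_sub_sq (F' x) g
        _ ≤ α * (γ₁ - γ₂) * ‖F' x - g‖ ^ 2 := by gcongr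
    linarith
  have hquad : K / 2 * (γ * α * ‖g‖) ^ 2 ≤ K / 2 * α ^ 2 * γ₁ ^ 2 * ‖g‖ ^ 2 :=
    calc K / 2 * (γ * α * ‖g‖) ^ 2 = K / 2 * α ^ 2 * γ ^ 2 * ‖g‖ ^ 2 := by ring
      _ ≤ K / 2 * α ^ 2 * γ₁ ^ 2 * ‖g‖ ^ 2 := by gcongr
  rw [hstep]
  linarith

variable {Ω : Type*} [MeasurableSpace Ω] {μ : Measure Ω} [IsProbabilityMeasure μ] {g : Ω → E}

theorem integral_norm_sq_eq_norm_sq_add_integral_norm_sub_sq {m : E} (hg : Integrable g μ)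
    (hvar : Integrable (fun ω => ‖m - g ω‖ ^ 2) μ) (hmean : ∫ ω, g ω ∂μ = m) :
    ∫ ω, ‖g ω‖ ^ 2 ∂μ = ‖m‖ ^ 2 + ∫ ω, ‖m - g ω‖ ^ 2 ∂μ := by
  have hexpand : ∀ ω, ‖g ω‖ ^ 2 = 2 * ⟪m, g ω⟫ - ‖m‖ ^ 2 + ‖m - g ω‖ ^ 2 := fun ω => by
    rw [norm_sub_sq_real]; ring
  have hinner : ∫ ω, ⟪m, g ω⟫ ∂μ = ‖m‖ ^ 2 := by
    rw [integral_inner hg, hmean, real_inner_self_eq_norm_sq]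
  have h2inner : Integrable (fun ω => 2 * ⟪m, g ω⟫) μ := (hg.const_inner m).const_mul 2
  have hlin : Integrable (fun ω => 2 * ⟪m, g ω⟫ - ‖m‖ ^ 2) μ :=
    h2inner.sub (integrable_const _)
  simp_rw [hexpand]
  rw [integral_add hlin hvar, integral_sub h2inner (integrable_const _), integral_const_mul,
    hinner, integral_const, probReal_univ, one_smul]
  ring

theorem integral_apply_add_trishStep_le {F : E → ℝ} {F' : E → E} {K : ℝ≥0}
    (hgrad : ∀ y, HasGradientAt F (F' y) y) (hlip : LipschitzWith K F') (x : E)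
    {α γ₁ γ₂ : ℝ} (hα : 0 ≤ α) (hγ₂ : 0 < γ₂) (hγ : γ₂ ≤ γ₁) (hg : Integrable g μ)
    (hF : Integrable (fun ω => F (x + trishStep α γ₁ γ₂ (g ω))) μ)
    (hvar : Integrable (fun ω => ‖F' x - g ω‖ ^ 2) μ) (hmean : ∫ ω, g ω ∂μ = F' x) :
    ∫ ω, F (x + trishStep α γ₁ γ₂ (g ω)) ∂μ ≤ F x - α * γ₂ * ‖F' x‖ ^ 2
      + α * (γ₁ - γ₂) * ∫ ω, ‖F' x - g ω‖ ^ 2 ∂μ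
      + K / 2 * α ^ 2 * γ₁ ^ 2 * (‖F' x‖ ^ 2 + ∫ ω, ‖F' x - g ω‖ ^ 2 ∂μ) := by
  have hinner : Integrable (fun ω => ⟪F' x, g ω⟫) μ := hg.const_inner _
  have hsq : Integrable (fun ω => ‖g ω‖ ^ 2) μ :=
    integrable_norm_sq_of_integrable_norm_sub_sq hg.aestronglyMeasurable _ hvar
  have hlin : Integrable (fun ω => F x - α * γ₂ * ⟪F' x, g ω⟫) μ :=
    (integrable_const _).sub (hinner.const_mul _)
  have hlin' : Integrable
      (fun ω => F x - α * γ₂ * ⟪F' x, g ω⟫ + α * (γ₁ - γ₂) * ‖F' x - g ω‖ ^ 2) μ :=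
    hlin.add (hvar.const_mul _)
  calc ∫ ω, F (x + trishStep α γ₁ γ₂ (g ω)) ∂μ
      ≤ ∫ ω, (F x - α * γ₂ * ⟪F' x, g ω⟫ + α * (γ₁ - γ₂) * ‖F' x - g ω‖ ^ 2
          + K / 2 * α ^ 2 * γ₁ ^ 2 * ‖g ω‖ ^ 2) ∂μ :=
        integral_mono hF (hlin'.add (hsq.const_mul _))
          fun ω => apply_add_trishStep_le hgrad hlip x (g ω) hα hγ₂ hγ
    _ = _ := by
      rw [integral_add hlin' (hsq.const_mul _), integral_add hlin (hvar.const_mul _),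
        integral_sub (integrable_const _) (hinner.const_mul _), integral_const_mul,
        integral_const_mul, integral_const_mul, integral_inner hg, hmean,
        real_inner_self_eq_norm_sq,
        integral_norm_sq_eq_norm_sq_add_integral_norm_sub_sq hg hvar hmean, integral_const,
        probReal_univ, one_smul]

end InnerProduct

theorem stmt_8 {n : ℕ} (F : EuclideanSpace ℝ (Fin n) → ℝ)
    (F' : EuclideanSpace ℝ (Fin n) → EuclideanSpace ℝ (Fin n)) (L : ℝ) (hL : 0 < L)
    (hgrad : ∀ y, HasGradientAt F (F' y) y)
    (hlip : LipschitzWith (Real.toNNReal L) F')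
    (x : EuclideanSpace ℝ (Fin n)) (α γ₁ γ₂ β : ℝ)
    (hα : 0 < α) (hγ₂ : 0 < γ₂) (hγ : γ₂ < γ₁)
    (hβ : β = (γ₁ ^ 2 - γ₂ ^ 2) / (2 * γ₂) + (1 / 2) * α * γ₁ ^ 2 * L)
    {Ω : Type*} [MeasurableSpace Ω] (μ : Measure Ω) [IsProbabilityMeasure μ]
    (g : Ω → EuclideanSpace ℝ (Fin n))
    (p : Ω → EuclideanSpace ℝ (Fin n))
    (hp : ∀ ω, p ω =
      if ‖g ω‖ < 1 / γ₁ then (-(γ₁ * α)) • g ω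
      else if ‖g ω‖ ≤ 1 / γ₂ then (-(α / ‖g ω‖)) • g ω
      else (-(γ₂ * α)) • g ω)
    (hint : Integrable g μ)
    (hintF : Integrable (fun ω => F (x + p ω)) μ)
    (hint2 : Integrable (fun ω => ‖F' x - g ω‖ ^ 2) μ)
    (hmean : ∫ ω, g ω ∂μ = F' x) :
    ∫ ω, F (x + p ω) ∂μ ≤
      F x - (1 / 2) * α * (γ₂ - α * γ₁ ^ 2 * L) * ‖F' x‖ ^ 2
        + α * β * ∫ ω, ‖F' x - g ω‖ ^ 2 ∂μ := by
  obtain rfl : p = fun ω => trishStep α γ₁ γ₂ (g ω) := funext hp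
  have hbound := integral_apply_add_trishStep_le hgrad hlip x hα.le hγ₂ hγ.le hint hintF hint2
    hmean
  rw [Real.coe_toNNReal L hL.le] at hbound
  have hvar_nonneg : 0 ≤ ∫ ω, ‖F' x - g ω‖ ^ 2 ∂μ := integral_nonneg fun ω => sq_nonneg _
  have hcoef : γ₁ - γ₂ ≤ (γ₁ ^ 2 - γ₂ ^ 2) / (2 * γ₂) := by
    rw [le_div_iff₀ (by positivity)]
    nlinarith [sq_nonneg (γ₁ - γ₂)]
  subst hβ
  linarith [mul_le_mul_of_nonneg_left hcoef (mul_nonneg hα.le hvar_nonneg),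
    mul_nonneg (mul_nonneg hα.le hγ₂.le) (sq_nonneg ‖F' x‖)]
end

section
/- Let $F : \mathbb{R}^n \to \mathbb{R}$ be differentiable with $L$-Lipschitz gradient, bounded below by $F_*$, satisfying the PL condition $\|\nabla F(x)\|^2 \ge 2\mu(F(x)-F_*)$. Let $0 < \gamma_2 < \gamma_1$ with $(\gamma_2/\gamma_1)^2 > 1 - \frac{1}{4M_2}$ and $\alpha < \min\{\frac{1}{4\gamma_2 L M_2}, \frac{2\gamma_2}{\mu\gamma_1^2}\}$. Let $(x_k)$ be TRish iterates with $\mathbb{E}_k[g_k] = \nabla F(x_k)$ and $\mathbb{E}_k[\|g_k\|^2] \le M_2\|\nabla F(x_k)\|^2$. Then $\mathbb{E}[F(x_{k+1})] - F_* \le (1 - \alpha\mu\frac{\gamma_1^2}{2\gamma_2})^{k+1}(F(x_0) - F_*)$, so $\mathbb{E}[F(x_k)] \to F_*$ as $k \to \infty$. -/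
/-!
Write `h = ∇F(x_k)` and `g = g_k`. Whatever branch of TRish is taken, the step is `-θ g` with
`θ ∈ [γ₂α, γ₁α]`, so the descent lemma of an `L`-smooth function gives
`F(x_{k+1}) ≤ F(x_k) - γ₂α⟪h, g⟫ + (γ₁ - γ₂)α‖h‖‖g‖ + Lγ₁²α²‖g‖²/2`.
Splitting `‖h‖‖g‖` by AM-GM with weight `√M₂` and taking expectations, `E⟪h, g⟫ = E‖h‖²` (pull-out
property of conditional expectation) and `E‖g‖² ≤ M₂ E‖h‖²` leave
`E F(x_{k+1}) ≤ E F(x_k) - α (γ₂ - (γ₁ - γ₂)√M₂ - Lγ₁²αM₂/2) E‖h‖²`. When `M₂ ≥ 1` the step-size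
conditions bound the coefficient below by `γ₁²/(4γ₂)`, and the PL inequality turns the decrease into
the contraction factor `1 - αμγ₁²/(2γ₂)`. When `M₂ < 1`, conditional Jensen
(`E‖h‖² ≤ E‖g‖² ≤ M₂ E‖h‖²`) forces `E‖h‖² = 0`, so `x_k` is already optimal in expectation.
-/

open MeasureTheory Set Filter Topology
open scoped NNReal RealInnerProductSpace

section Descent

variable {E : Type*} [NormedAddCommGroup E] [InnerProductSpace ℝ E] [CompleteSpace E]
  {f : E → ℝ} {f' : E → E} {K : ℝ≥0}

theorem apply_add_le_of_lipschitzWith_gradient_s14 (hf : ∀ y, HasGradientAt f (f' y) y)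
    (hf' : LipschitzWith K f') (y p : E) :
    f (y + p) ≤ f y + ⟪f' y, p⟫ + K / 2 * ‖p‖ ^ 2 := by
  set φ : ℝ → ℝ := fun t => f (y + t • p) - t * ⟪f' y, p⟫ - K / 2 * t ^ 2 * ‖p‖ ^ 2
  have hφ : ∀ t, HasDerivAt φ (⟪f' (y + t • p) - f' y, p⟫ - K * t * ‖p‖ ^ 2) t := by
    intro t
    have hline : HasDerivAt (fun t : ℝ => y + t • p) p t := by
      simpa using ((hasDerivAt_id t).smul_const p).const_add y
    have hf_line := (hf (y + t • p)).hasFDerivAt.comp_hasDerivAt t hline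
    have hquad := ((hasDerivAt_pow 2 t).const_mul (K / 2 : ℝ)).mul_const (‖p‖ ^ 2)
    refine ((hf_line.sub ((hasDerivAt_id t).mul_const ⟪f' y, p⟫)).sub hquad).congr_deriv ?_
    rw [InnerProductSpace.toDual_apply_apply, inner_sub_left]
    ring
  have hφ_nonpos : ∀ t ∈ interior (Ici (0 : ℝ)),
      ⟪f' (y + t • p) - f' y, p⟫ - K * t * ‖p‖ ^ 2 ≤ 0 := by
    intro t ht
    rw [interior_Ici, mem_Ioi] at ht
    rw [sub_nonpos]
    have hlip : ‖f' (y + t • p) - f' y‖ ≤ K * (t * ‖p‖) := by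
      simpa [dist_eq_norm, norm_smul, abs_of_pos ht] using hf'.dist_le_mul (y + t • p) y
    calc ⟪f' (y + t • p) - f' y, p⟫ ≤ ‖f' (y + t • p) - f' y‖ * ‖p‖ := real_inner_le_norm _ _
      _ ≤ K * (t * ‖p‖) * ‖p‖ := by gcongr
      _ = K * t * ‖p‖ ^ 2 := by ring
  have hanti : AntitoneOn φ (Ici 0) :=
    antitoneOn_of_hasDerivWithinAt_nonpos (convex_Ici 0)
      (fun t _ => (hφ t).continuousAt.continuousWithinAt)
      (fun t _ => (hφ t).hasDerivWithinAt) hφ_nonpos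
  have := hanti self_mem_Ici (mem_Ici.2 zero_le_one) zero_le_one
  simp only [φ, zero_smul, add_zero, one_smul, zero_mul, sub_zero, one_pow, mul_one, ne_eq,
    OfNat.ofNat_ne_zero, not_false_eq_true, zero_pow, mul_zero] at this
  linarith

theorem sq_norm_le_of_lipschitzWith_gradient (hf : ∀ y, HasGradientAt f (f' y) y)
    (hf' : LipschitzWith K f') (hK : 0 < K) {c : ℝ} (hc : ∀ y, c ≤ f y) (y : E) :
    ‖f' y‖ ^ 2 ≤ 2 * K * (f y - c) := by
  have hK' : (0 : ℝ) < K := hK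
  have := apply_add_le_of_lipschitzWith_gradient_s14 hf hf' y (-(1 / (K : ℝ)) • f' y)
  rw [inner_smul_right, real_inner_self_eq_norm_sq, norm_smul, mul_pow, norm_neg,
    Real.norm_of_nonneg (by positivity)] at this
  have hc' := hc (y + (-(1 / (K : ℝ))) • f' y)
  field_simp at this
  nlinarith

theorem apply_sub_smul_le_of_mem_Icc (hf : ∀ y, HasGradientAt f (f' y) y)
    (hf' : LipschitzWith K f') {a b θ s : ℝ} (ha : 0 ≤ a) (hθ : θ ∈ Icc a b) (hs : 0 < s)
    (y v : E) :
    f (y - θ • v) ≤ f y - a * ⟪f' y, v⟫ + (b - a) * s / 2 * ‖f' y‖ ^ 2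
      + ((b - a) / (2 * s) + K / 2 * b ^ 2) * ‖v‖ ^ 2 := by
  have hdesc := apply_add_le_of_lipschitzWith_gradient_s14 hf hf' y (-(θ • v))
  rw [← sub_eq_add_neg, inner_neg_right, inner_smul_right, norm_neg, norm_smul, mul_pow,
    Real.norm_eq_abs, sq_abs] at hdesc
  have hab : 0 ≤ b - a := by linarith [hθ.1, hθ.2]
  have hinner : (a - θ) * ⟪f' y, v⟫ ≤ (b - a) * (‖f' y‖ * ‖v‖) := by
    calc (a - θ) * ⟪f' y, v⟫ ≤ (θ - a) * |⟪f' y, v⟫| := by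
          nlinarith [neg_abs_le ⟪f' y, v⟫, hθ.1]
      _ ≤ (b - a) * (‖f' y‖ * ‖v‖) :=
          mul_le_mul (by linarith [hθ.2]) (abs_real_inner_le_norm _ _) (abs_nonneg _) hab
  have hamgm : ‖f' y‖ * ‖v‖ ≤ s / 2 * ‖f' y‖ ^ 2 + ‖v‖ ^ 2 / (2 * s) := by
    have hsq : s / 2 * ‖f' y‖ ^ 2 + ‖v‖ ^ 2 / (2 * s) - ‖f' y‖ * ‖v‖
        = (s * ‖f' y‖ - ‖v‖) ^ 2 / (2 * s) := by
      field_simp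
      ring
    linarith [div_nonneg (sq_nonneg (s * ‖f' y‖ - ‖v‖)) (by positivity : (0 : ℝ) ≤ 2 * s)]
  have hθsq : θ ^ 2 ≤ b ^ 2 := pow_le_pow_left₀ (ha.trans hθ.1) hθ.2 2
  have hquad : (K : ℝ) / 2 * (θ ^ 2 * ‖v‖ ^ 2) ≤ K / 2 * b ^ 2 * ‖v‖ ^ 2 := by
    rw [← mul_assoc (K / 2 : ℝ)]
    gcongr
  linear_combination hdesc + hinner + mul_le_mul_of_nonneg_left hamgm hab + hquad

end Descent

theorem exists_trish_step_eq_neg_smul {E : Type*} [NormedAddCommGroup E] [NormedSpace ℝ E]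
    {α γ₁ γ₂ : ℝ} (hα : 0 ≤ α) (hγ₂ : 0 < γ₂) (hγ : γ₂ ≤ γ₁) (v : E) :
    ∃ θ ∈ Icc (γ₂ * α) (γ₁ * α),
      (if ‖v‖ < 1 / γ₁ then (-(γ₁ * α)) • v
       else if ‖v‖ ≤ 1 / γ₂ then (-(α / ‖v‖)) • v
       else (-(γ₂ * α)) • v) = -(θ • v) := by
  have hγ₁ : 0 < γ₁ := hγ₂.trans_le hγ
  split_ifs with h₁ h₂
  · exact ⟨γ₁ * α, ⟨by gcongr, le_rfl⟩, neg_smul _ _⟩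
  · rw [not_lt, div_le_iff₀ hγ₁] at h₁
    rw [le_div_iff₀ hγ₂] at h₂
    have hv : 0 < ‖v‖ := by nlinarith
    refine ⟨α / ‖v‖, ⟨?_, ?_⟩, neg_smul _ _⟩
    · rw [le_div_iff₀ hv]; nlinarith
    · rw [div_le_iff₀ hv]; nlinarith
  · exact ⟨γ₂ * α, ⟨le_rfl, by gcongr⟩, neg_smul _ _⟩

theorem abs_real_inner_le_half_add_sq_norm {E : Type*} [NormedAddCommGroup E]
    [InnerProductSpace ℝ E] (u v : E) : |⟪u, v⟫| ≤ (‖u‖ ^ 2 + ‖v‖ ^ 2) / 2 := by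
  linarith [abs_real_inner_le_norm u v, two_mul_le_add_sq ‖u‖ ‖v‖]

theorem sq_div_four_le_trish_coeff {α γ₁ γ₂ L M : ℝ} (hγ₂ : 0 < γ₂) (hγ : γ₂ < γ₁) (hL : 0 < L)
    (hM : 1 ≤ M) (hratio : (γ₂ / γ₁) ^ 2 > 1 - 1 / (4 * M)) (hα : α < 1 / (4 * γ₂ * L * M)) :
    γ₁ ^ 2 / (4 * γ₂) ≤ γ₂ - (γ₁ - γ₂) * √M - L * γ₁ ^ 2 * α * M / 2 := by
  have hγ₁ : 0 < γ₁ := hγ₂.trans hγ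
  have hM0 : 0 < M := one_pos.trans_le hM
  have hαL : 4 * γ₂ * L * M * α ≤ 1 := by
    rw [lt_div_iff₀ (by positivity)] at hα
    linarith
  have hratio' : 4 * M * (γ₁ ^ 2 - γ₂ ^ 2) < γ₁ ^ 2 := by
    have key : 4 * M * (γ₁ ^ 2 - γ₂ ^ 2) - γ₁ ^ 2
        = 4 * M * γ₁ ^ 2 * ((1 - 1 / (4 * M)) - (γ₂ / γ₁) ^ 2) := by
      field_simp
      ring
    have := mul_neg_of_pos_of_neg (by positivity : 0 < 4 * M * γ₁ ^ 2) (sub_neg.2 hratio)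
    linarith
  have hs : √M ≤ M := by
    nth_rewrite 2 [← Real.sq_sqrt hM0.le]
    nlinarith [Real.one_le_sqrt.2 hM]
  have hγ₂sq : 3 * γ₁ ^ 2 < 4 * γ₂ ^ 2 := by nlinarith
  have hgap : 4 * γ₂ * ((γ₁ - γ₂) * √M) ≤ γ₁ ^ 2 / 2 := by
    nlinarith [mul_le_mul_of_nonneg_left hs (by nlinarith : 0 ≤ 4 * γ₂ * (γ₁ - γ₂))]
  have hLα : 4 * γ₂ * (L * γ₁ ^ 2 * α * M / 2) ≤ γ₁ ^ 2 / 2 := by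
    nlinarith [mul_le_mul_of_nonneg_left hαL (sq_nonneg γ₁)]
  rw [div_le_iff₀ (by positivity)]
  nlinarith

theorem le_trish_rate_mul_of_descent {α γ₁ γ₂ L M μ e e' G : ℝ} (hα : 0 < α) (hγ₂ : 0 < γ₂)
    (hγ : γ₂ < γ₁) (hL : 0 < L) (hratio : (γ₂ / γ₁) ^ 2 > 1 - 1 / (4 * M))
    (hαL : α < 1 / (4 * γ₂ * L * M)) (hG : 0 ≤ G) (hGM : G ≤ M * G) (hPL : 2 * μ * e ≤ G)
    (hdesc : e' ≤ e - α * (γ₂ - (γ₁ - γ₂) * √M - L * γ₁ ^ 2 * α * M / 2) * G) :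
    e' ≤ (1 - α * μ * (γ₁ ^ 2 / (2 * γ₂))) * e := by
  have hD : 0 ≤ α * (γ₁ ^ 2 / (4 * γ₂)) := by positivity
  rcases lt_or_ge M 1 with hM | hM
  · have hG0 : G = 0 := by nlinarith
    subst hG0
    have hμe : α * (γ₁ ^ 2 / (2 * γ₂)) * (μ * e) ≤ 0 :=
      mul_nonpos_of_nonneg_of_nonpos (by positivity) (by linarith)
    linear_combination hdesc + hμe
  · have hcoeff : α * (γ₁ ^ 2 / (4 * γ₂)) * G
        ≤ α * (γ₂ - (γ₁ - γ₂) * √M - L * γ₁ ^ 2 * α * M / 2) * G := by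
      gcongr
      exact sq_div_four_le_trish_coeff hγ₂ hγ hL hM hratio hαL
    linear_combination hdesc + hcoeff + mul_le_mul_of_nonneg_left hPL hD

theorem tendsto_nhds_of_sub_le_mul_sub {u : ℕ → ℝ} {l c : ℝ} (hc₀ : 0 ≤ c) (hc₁ : c < 1)
    (hl : ∀ k, l ≤ u k) (hu : ∀ k, u (k + 1) - l ≤ c * (u k - l)) :
    Tendsto u atTop (𝓝 l) := by
  have hgeom : ∀ k, u k - l ≤ c ^ k * (u 0 - l) := fun k =>
    le_geom (u := fun k => u k - l) hc₀ k fun i _ => hu i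
  have hc := (tendsto_pow_atTop_nhds_zero_of_lt_one hc₀ hc₁).mul_const (u 0 - l)
  rw [zero_mul] at hc
  simpa using (squeeze_zero (fun k => sub_nonneg.2 (hl k)) hgeom hc).add_const l

section Expectation

variable {Ω E : Type*} {m m0 : MeasurableSpace Ω} {μ : Measure Ω}
  [NormedAddCommGroup E] [InnerProductSpace ℝ E]

theorem integrable_inner_of_integrable_sq_norm {u v : Ω → E} (hu : AEStronglyMeasurable u μ)
    (hv : AEStronglyMeasurable v μ) (hu2 : Integrable (fun ω => ‖u ω‖ ^ 2) μ)
    (hv2 : Integrable (fun ω => ‖v ω‖ ^ 2) μ) :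
    Integrable (fun ω => ⟪u ω, v ω⟫) μ :=
  ((hu2.add hv2).div_const 2).mono' (hu.inner hv)
    (ae_of_all _ fun ω => abs_real_inner_le_half_add_sq_norm (u ω) (v ω))

theorem integral_le_integral_of_condExp_le (hm : m ≤ m0) [SigmaFinite (μ.trim hm)]
    {f u : Ω → ℝ} (hu : Integrable u μ) (hle : μ[f|m] ≤ᵐ[μ] u) :
    ∫ ω, f ω ∂μ ≤ ∫ ω, u ω ∂μ := by
  rw [← integral_condExp hm]
  exact integral_mono_ae integrable_condExp hu hle

variable [CompleteSpace E]

theorem integrable_sq_norm_gradient_comp [IsFiniteMeasure μ] {f : E → ℝ} {f' : E → E}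
    {K : ℝ≥0} (hf : ∀ y, HasGradientAt f (f' y) y) (hf' : LipschitzWith K f') (hK : 0 < K)
    {c : ℝ} (hc : ∀ y, c ≤ f y) {y : Ω → E} (hy : AEStronglyMeasurable y μ)
    (hfy : Integrable (fun ω => f (y ω)) μ) :
    Integrable (fun ω => ‖f' (y ω)‖ ^ 2) μ := by
  refine ((hfy.sub (integrable_const c)).const_mul (2 * K)).mono'
    ((hf'.continuous.comp_aestronglyMeasurable hy).norm.pow 2) (ae_of_all _ fun ω => ?_)
  rw [Real.norm_of_nonneg (sq_nonneg _)]
  exact sq_norm_le_of_lipschitzWith_gradient hf hf' hK hc (y ω)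

theorem integral_inner_eq_integral_sq_norm_of_condExp_eq (hm : m ≤ m0)
    [SigmaFinite (μ.trim hm)] {h v : Ω → E} (hh : StronglyMeasurable[m] h) (hv : Integrable v μ)
    (hhv : Integrable (fun ω => ⟪h ω, v ω⟫) μ) (hcond : μ[v|m] =ᵐ[μ] h) :
    ∫ ω, ⟪h ω, v ω⟫ ∂μ = ∫ ω, ‖h ω‖ ^ 2 ∂μ := by
  rw [← integral_condExp hm]
  refine integral_congr_ae ?_
  filter_upwards [condExp_bilin_of_stronglyMeasurable_left (innerSL ℝ) hh hhv hv, hcond]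
    with ω hpull hω
  rw [hω] at hpull
  exact hpull.trans (real_inner_self_eq_norm_sq _)

theorem integral_sq_norm_le_of_condExp_eq (hm : m ≤ m0) [SigmaFinite (μ.trim hm)]
    {h v : Ω → E} (hh : StronglyMeasurable[m] h) (hv : Integrable v μ)
    (hh2 : Integrable (fun ω => ‖h ω‖ ^ 2) μ) (hv2 : Integrable (fun ω => ‖v ω‖ ^ 2) μ)
    (hcond : μ[v|m] =ᵐ[μ] h) :
    ∫ ω, ‖h ω‖ ^ 2 ∂μ ≤ ∫ ω, ‖v ω‖ ^ 2 ∂μ := by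
  have hhv := integrable_inner_of_integrable_sq_norm (hh.mono hm).aestronglyMeasurable
    hv.aestronglyMeasurable hh2 hv2
  have hmono : ∫ ω, ⟪h ω, v ω⟫ ∂μ ≤ ∫ ω, (‖h ω‖ ^ 2 + ‖v ω‖ ^ 2) / 2 ∂μ :=
    integral_mono hhv ((hh2.add hv2).div_const 2)
      fun ω => (le_abs_self _).trans (abs_real_inner_le_half_add_sq_norm _ _)
  rw [integral_inner_eq_integral_sq_norm_of_condExp_eq hm hh hv hhv hcond, integral_div,
    integral_add hh2 hv2] at hmono
  linarith

theorem integral_apply_le_of_condExp_eq_gradient (hm : m ≤ m0) [SigmaFinite (μ.trim hm)]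
    {f : E → ℝ} {f' : E → E} {K : ℝ≥0} (hf : ∀ y, HasGradientAt f (f' y) y)
    (hf' : LipschitzWith K f') {a b M : ℝ} (ha : 0 ≤ a) (hab : a ≤ b) (hM : 0 < M)
    {y y' v : Ω → E} (hy : StronglyMeasurable[m] y)
    (hstep : ∀ ω, ∃ θ ∈ Icc a b, y' ω = y ω - θ • v ω)
    (hfy : Integrable (fun ω => f (y ω)) μ) (hfy' : Integrable (fun ω => f (y' ω)) μ)
    (hv : Integrable v μ) (hv2 : Integrable (fun ω => ‖v ω‖ ^ 2) μ)
    (hgrad2 : Integrable (fun ω => ‖f' (y ω)‖ ^ 2) μ)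
    (hcond : μ[v|m] =ᵐ[μ] fun ω => f' (y ω))
    (hvar : μ[fun ω => ‖v ω‖ ^ 2|m] ≤ᵐ[μ] fun ω => M * ‖f' (y ω)‖ ^ 2) :
    ∫ ω, f (y' ω) ∂μ ≤ ∫ ω, f (y ω) ∂μ
      - (a - (b - a) * √M - K * b ^ 2 * M / 2) * ∫ ω, ‖f' (y ω)‖ ^ 2 ∂μ := by
  set s := √M
  have hs : 0 < s := Real.sqrt_pos.2 hM
  have hs2 : s ^ 2 = M := Real.sq_sqrt hM.le
  set c := (b - a) / (2 * s) + K / 2 * b ^ 2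
  have hc : 0 ≤ c := by
    have : 0 ≤ b - a := sub_nonneg.2 hab
    positivity
  have hh : StronglyMeasurable[m] fun ω => f' (y ω) :=
    hf'.continuous.comp_stronglyMeasurable hy
  have hinner := integrable_inner_of_integrable_sq_norm (hh.mono hm).aestronglyMeasurable
    hv.aestronglyMeasurable hgrad2 hv2
  have hpt : ∀ ω, f (y' ω) ≤ f (y ω) - a * ⟪f' (y ω), v ω⟫
      + (b - a) * s / 2 * ‖f' (y ω)‖ ^ 2 + c * ‖v ω‖ ^ 2 := fun ω => by
    obtain ⟨θ, hθ, hy'⟩ := hstep ω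
    rw [hy']
    exact apply_sub_smul_le_of_mem_Icc hf hf' ha hθ hs (y ω) (v ω)
  have hA : Integrable (fun ω => f (y ω) - a * ⟪f' (y ω), v ω⟫) μ :=
    hfy.sub (hinner.const_mul a)
  have hAB : Integrable (fun ω => f (y ω) - a * ⟪f' (y ω), v ω⟫
      + (b - a) * s / 2 * ‖f' (y ω)‖ ^ 2) μ := hA.add (hgrad2.const_mul _)
  have hmono : ∫ ω, f (y' ω) ∂μ ≤ ∫ ω, (f (y ω) - a * ⟪f' (y ω), v ω⟫
      + (b - a) * s / 2 * ‖f' (y ω)‖ ^ 2 + c * ‖v ω‖ ^ 2) ∂μ :=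
    integral_mono hfy' (hAB.add (hv2.const_mul c)) hpt
  rw [integral_add hAB (hv2.const_mul c), integral_add hA (hgrad2.const_mul _),
    integral_sub hfy (hinner.const_mul a), integral_const_mul, integral_const_mul,
    integral_const_mul, integral_inner_eq_integral_sq_norm_of_condExp_eq hm hh hv hinner hcond]
    at hmono
  have hvar' : ∫ ω, ‖v ω‖ ^ 2 ∂μ ≤ M * ∫ ω, ‖f' (y ω)‖ ^ 2 ∂μ := by
    rw [← integral_const_mul]
    exact integral_le_integral_of_condExp_le hm (hgrad2.const_mul M) hvar
  -- the weight `s = √M` makes the two AM-GM terms equal once `E‖v‖² ≤ M E‖f' y‖²` is used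
  have hcM : c * M = (b - a) * s / 2 + K * b ^ 2 * M / 2 := by
    rw [← hs2]
    simp only [c]
    field_simp
  linear_combination hmono + mul_le_mul_of_nonneg_left hvar' hc
    + (∫ ω, ‖f' (y ω)‖ ^ 2 ∂μ) * hcM

theorem integral_sub_le_trish_rate_mul (hm : m ≤ m0) [IsProbabilityMeasure μ]
    {f : E → ℝ} {f' : E → E} {L fstar μpl : ℝ} (hL : 0 < L)
    (hf : ∀ y, HasGradientAt f (f' y) y) (hf' : LipschitzWith L.toNNReal f')
    (hbdd : ∀ y, fstar ≤ f y) (hPL : ∀ y, ‖f' y‖ ^ 2 ≥ 2 * μpl * (f y - fstar))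
    {α γ₁ γ₂ M : ℝ} (hα : 0 < α) (hγ₂ : 0 < γ₂) (hγ : γ₂ < γ₁) (hM : 0 < M)
    (hratio : (γ₂ / γ₁) ^ 2 > 1 - 1 / (4 * M)) (hαL : α < 1 / (4 * γ₂ * L * M))
    {y y' v : Ω → E} (hy : StronglyMeasurable[m] y)
    (hstep : ∀ ω, ∃ θ ∈ Icc (γ₂ * α) (γ₁ * α), y' ω = y ω - θ • v ω)
    (hfy : Integrable (fun ω => f (y ω)) μ) (hfy' : Integrable (fun ω => f (y' ω)) μ)
    (hv : Integrable v μ) (hv2 : Integrable (fun ω => ‖v ω‖ ^ 2) μ)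
    (hcond : μ[v|m] =ᵐ[μ] fun ω => f' (y ω))
    (hvar : μ[fun ω => ‖v ω‖ ^ 2|m] ≤ᵐ[μ] fun ω => M * ‖f' (y ω)‖ ^ 2) :
    ∫ ω, f (y' ω) ∂μ - fstar ≤ (1 - α * μpl * (γ₁ ^ 2 / (2 * γ₂))) * (∫ ω, f (y ω) ∂μ - fstar) := by
  have hgrad2 := integrable_sq_norm_gradient_comp hf hf' (Real.toNNReal_pos.2 hL) hbdd
    (hy.mono hm).aestronglyMeasurable hfy
  have hdesc := integral_apply_le_of_condExp_eq_gradient hm hf hf' (by positivity)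
    (by gcongr) hM hy hstep hfy hfy' hv hv2 hgrad2 hcond hvar
  rw [Real.coe_toNNReal _ hL.le] at hdesc
  have hGM : ∫ ω, ‖f' (y ω)‖ ^ 2 ∂μ ≤ M * ∫ ω, ‖f' (y ω)‖ ^ 2 ∂μ := by
    rw [← integral_const_mul]
    exact (integral_sq_norm_le_of_condExp_eq hm (hf'.continuous.comp_stronglyMeasurable hy) hv
      hgrad2 hv2 hcond).trans (integral_le_integral_of_condExp_le hm (hgrad2.const_mul M) hvar)
  have hPL_int : 2 * μpl * (∫ ω, f (y ω) ∂μ - fstar) ≤ ∫ ω, ‖f' (y ω)‖ ^ 2 ∂μ := by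
    have := integral_mono (f := fun ω => 2 * μpl * (f (y ω) - fstar))
      ((hfy.sub (integrable_const fstar)).const_mul (2 * μpl)) hgrad2 fun ω => hPL (y ω)
    rwa [integral_const_mul, integral_sub hfy (integrable_const _), integral_const,
      probReal_univ, smul_eq_mul, one_mul] at this
  exact le_trish_rate_mul_of_descent hα hγ₂ hγ hL hratio hαL
    (integral_nonneg fun ω => sq_nonneg _) hGM hPL_int (by linear_combination hdesc)

end Expectation

theorem stmt_14 {n : ℕ} (F : EuclideanSpace ℝ (Fin n) → ℝ)
    (F' : EuclideanSpace ℝ (Fin n) → EuclideanSpace ℝ (Fin n))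
    (L Fstar μpl : ℝ) (hL : 0 < L) (hμ : 0 < μpl)
    (hgrad : ∀ y, HasGradientAt F (F' y) y)
    (hlip : LipschitzWith (Real.toNNReal L) F')
    (hbdd : ∀ y, Fstar ≤ F y)
    (hPL : ∀ y, ‖F' y‖ ^ 2 ≥ 2 * μpl * (F y - Fstar))
    (α γ₁ γ₂ M₂ : ℝ) (hα : 0 < α) (hγ₂ : 0 < γ₂) (hγ : γ₂ < γ₁) (hM₂ : 0 < M₂)
    (hratio : (γ₂ / γ₁) ^ 2 > 1 - 1 / (4 * M₂))
    (hαlt : α < min (1 / (4 * γ₂ * L * M₂)) (2 * γ₂ / (μpl * γ₁ ^ 2)))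
    {Ω : Type*} {m0 : MeasurableSpace Ω} (μ : Measure Ω) [IsProbabilityMeasure μ]
    (ℱ : Filtration ℕ m0)
    (x g : ℕ → Ω → EuclideanSpace ℝ (Fin n))
    (x₀ : EuclideanSpace ℝ (Fin n)) (hx₀ : ∀ ω, x 0 ω = x₀)
    (hadapted : Adapted ℱ x)
    (hstep : ∀ k ω, x (k + 1) ω = x k ω +
      (if ‖g k ω‖ < 1 / γ₁ then (-(γ₁ * α)) • g k ω
       else if ‖g k ω‖ ≤ 1 / γ₂ then (-(α / ‖g k ω‖)) • g k ω
       else (-(γ₂ * α)) • g k ω))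
    (hintg : ∀ k, Integrable (g k) μ)
    (hintF : ∀ k, Integrable (fun ω => F (x k ω)) μ)
    (hint2 : ∀ k, Integrable (fun ω => ‖g k ω‖ ^ 2) μ)
    (hunbiased : ∀ k, μ[g k | ℱ k] =ᵐ[μ] fun ω => F' (x k ω))
    (hvar : ∀ k, ∀ᵐ ω ∂μ,
      (μ[fun ω' => ‖g k ω'‖ ^ 2 | ℱ k]) ω ≤ M₂ * ‖F' (x k ω)‖ ^ 2) :
    (∀ k : ℕ, (∫ ω, F (x (k + 1) ω) ∂μ) - Fstar ≤
        (1 - α * μpl * (γ₁ ^ 2 / (2 * γ₂))) ^ (k + 1) * (F x₀ - Fstar)) ∧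
      Filter.Tendsto (fun k => ∫ ω, F (x k ω) ∂μ) Filter.atTop (nhds Fstar) := by
  have hρ : 0 < α * μpl * (γ₁ ^ 2 / (2 * γ₂)) ∧ α * μpl * (γ₁ ^ 2 / (2 * γ₂)) < 1 := by
    have hγ₁ : 0 < γ₁ := hγ₂.trans hγ
    have hα₂ := (lt_min_iff.1 hαlt).2
    rw [lt_div_iff₀ (by positivity)] at hα₂
    rw [show α * μpl * (γ₁ ^ 2 / (2 * γ₂)) = α * (μpl * γ₁ ^ 2) / (2 * γ₂) by ring,
      div_lt_one (by positivity)]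
    exact ⟨by positivity, by linarith⟩
  have hcontr : ∀ k, ∫ ω, F (x (k + 1) ω) ∂μ - Fstar
      ≤ (1 - α * μpl * (γ₁ ^ 2 / (2 * γ₂))) * (∫ ω, F (x k ω) ∂μ - Fstar) := fun k =>
    integral_sub_le_trish_rate_mul (ℱ.le k) hL hgrad hlip hbdd hPL hα hγ₂ hγ hM₂ hratio
      (lt_min_iff.1 hαlt).1 (hadapted k).stronglyMeasurable
      (fun ω => by
        obtain ⟨θ, hθ, heq⟩ := exists_trish_step_eq_neg_smul hα.le hγ₂ hγ.le (g k ω)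
        exact ⟨θ, hθ, by rw [hstep, heq, sub_eq_add_neg]⟩)
      (hintF k) (hintF (k + 1)) (hintg k) (hint2 k) (hunbiased k) (hvar k)
  have hgap : ∀ k, Fstar ≤ ∫ ω, F (x k ω) ∂μ := fun k => by
    simpa using integral_mono (integrable_const Fstar) (hintF k) fun ω => hbdd (x k ω)
  refine ⟨fun k => ?_, tendsto_nhds_of_sub_le_mul_sub (by linarith) (by linarith) hgap hcontr⟩
  simpa [hx₀] using le_geom (u := fun k => ∫ ω, F (x k ω) ∂μ - Fstar) (by linarith) (k + 1)
    fun i _ => hcontr i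
end
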